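/- arXiv:1111.6091 — 3 statements merged into one kernel-verified Lean document; each statement's English description precedes it below -/
import Mathlib

section
/- The Hadamard product of a symmetric positive definite matrix and a symmetric positive semidefinite matrix with strictly positive diagonal entries is symmetric positive definite. In particular, the Hadamard product of finitely many symmetric positive definite matrices is symmetric positive definite. -/
/-!
Since `A` is positive definite, `A - r • 1` is still positive semidefinite for some `r > 0`, so
`A ⊙ B = (A - r • 1) ⊙ B + r • diagonal (diag B)`. The first summand is positive semidefinite by
the Schur product theorem, the second is positive definite because the diagonal of `B` is
positive. Products of several positive definite matrices follow by induction.
-/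

open scoped MatrixOrder ComplexOrder

namespace Matrix

section

variable {ι 𝕜 : Type*} [Fintype ι] [DecidableEq ι] [RCLike 𝕜]

theorem PosDef.exists_pos_algebraMap_le {A : Matrix ι ι 𝕜} (hA : A.PosDef) :
    ∃ r > 0, algebraMap ℝ (Matrix ι ι 𝕜) r ≤ A := by
  cases subsingleton_or_nontrivial (Matrix ι ι 𝕜)
  · exact ⟨1, one_pos, (Subsingleton.elim _ _).le⟩
  · exact (CFC.exists_pos_algebraMap_le_iff hA.isHermitian).2 fun _ hx ↦
      hA.isStrictlyPositive.spectrum_pos hx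

theorem PosDef.hadamard_of_posSemidef {A B : Matrix ι ι 𝕜} (hA : A.PosDef)
    (hB : B.PosSemidef) (hB_diag : ∀ i, 0 < B i i) : (A ⊙ B).PosDef := by
  obtain ⟨r, hr, hrA⟩ := hA.exists_pos_algebraMap_le
  have hsplit : A ⊙ B = (A - algebraMap ℝ _ r) ⊙ B + algebraMap ℝ _ r ⊙ B := by
    rw [← add_hadamard, sub_add_cancel]
  have hdiag : (algebraMap ℝ (Matrix ι ι 𝕜) r ⊙ B).PosDef := by
    rw [algebraMap_eq_diagonal, diagonal_hadamard, posDef_diagonal_iff]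
    exact fun i ↦ mul_pos (by simpa using hr) (hB_diag i)
  rw [hsplit]
  exact PosDef.posSemidef_add ((le_iff.mp hrA).hadamard hB) hdiag

end

theorem posDef_of_entrywise_prod {ι κ 𝕜 : Type*} [RCLike 𝕜] {M : κ → Matrix ι ι 𝕜}
    {s : Finset κ} (hs : s.Nonempty) (hM : ∀ k ∈ s, (M k).PosDef) :
    (of fun i j ↦ ∏ k ∈ s, M k i j).PosDef := by
  induction hs using Finset.Nonempty.cons_induction with
  | singleton k =>
    simp only [Finset.prod_singleton]
    exact hM k (Finset.mem_singleton_self k)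
  | cons k s hk _ ih =>
    have hprod : (of fun i j ↦ ∏ l ∈ s.cons k hk, M l i j) =
        M k ⊙ of fun i j ↦ ∏ l ∈ s, M l i j := by
      ext i j
      simp [Finset.prod_cons]
    rw [hprod]
    exact (hM k (Finset.mem_cons_self k s)).hadamard
      (ih fun l hl ↦ hM l (Finset.mem_cons_of_mem hl))

end Matrix

/-- The Hadamard product of a symmetric positive definite matrix and a symmetric
positive semidefinite matrix with strictly positive diagonal entries is symmetric
positive definite; in particular, the Hadamard product of finitely many (at least
one) symmetric positive definite matrices is symmetric positive definite. -/
theorem hadamard_posDef {n : ℕ} :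
    (∀ A B : Matrix (Fin n) (Fin n) ℝ, A.PosDef → B.PosSemidef →
      (∀ i, 0 < B i i) → (Matrix.hadamard A B).PosDef) ∧
    (∀ (K : ℕ) (M : Fin (K + 1) → Matrix (Fin n) (Fin n) ℝ),
      (∀ k, (M k).PosDef) →
      (Matrix.of fun i j => ∏ k, M k i j).PosDef) :=
  ⟨fun _ _ hA hB hB_diag ↦ hA.hadamard_of_posSemidef hB hB_diag,
    fun _ _ hM ↦ Matrix.posDef_of_entrywise_prod Finset.univ_nonempty fun k _ ↦ hM k⟩
end

section
/- Gauss–Seidel convergence for consistent semidefinite systems (Keller): let Γ ∈ ℝ^{R×R} be symmetric positive semidefinite with strictly positive diagonal entries, and let b ∈ ℝ^R lie in the column space of Γ. Then the Gauss–Seidel iteration x_{k+1} = x_k + D_L^{-1}(b − Γ x_k), where D_L is the lower triangular part of Γ (including the diagonal), converges to a solution of Γ x = b. -/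
/-!
Write `L` for the lower triangular part of `Γ`, `y` for a solution and `e_k = x_k - y`. A step
reads `L d_k = Γ e_k` with `d_k = x_k - x_{k+1}`, and `Γ = L + Lᵀ - D` turns this into the energy
identity `e_{k+1}ᵀ Γ e_{k+1} = e_kᵀ Γ e_k - d_kᵀ D d_k`. A generalized inverse `G` of `Γ`
(`Γ G Γ = Γ`) gives `eᵀ Γ e = (Γ e)ᵀ G (Γ e) ≤ c ‖L d‖²`, so every step removes a fixed fraction
of the energy. Hence the steps decay geometrically, `x_k` is Cauchy, and
`Γ x_k - b = L (x_k - x_{k+1}) → 0` shows that the limit solves `Γ x = b`.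
-/

open Matrix Filter Topology

theorem abs_dotProduct_le {n : Type*} [Fintype n] (u v : n → ℝ) :
    |u ⬝ᵥ v| ≤ Fintype.card n * (‖u‖ * ‖v‖) := by
  calc |u ⬝ᵥ v| ≤ ∑ i, |u i * v i| := Finset.abs_sum_le_sum_abs _ _
    _ ≤ ∑ _i : n, ‖u‖ * ‖v‖ := by
        gcongr with i
        rw [abs_mul]
        exact mul_le_mul (norm_le_pi_norm u i) (norm_le_pi_norm v i) (abs_nonneg _)
          (norm_nonneg _)
    _ = Fintype.card n * (‖u‖ * ‖v‖) := by simp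

theorem exists_pos_mul_norm_sq_le_sum_mul_sq {n : Type*} [Fintype n] {w : n → ℝ}
    (hw : ∀ i, 0 < w i) : ∃ a > 0, ∀ d : n → ℝ, a * ‖d‖ ^ 2 ≤ ∑ i, w i * d i ^ 2 := by
  obtain ⟨a, hwa, ha⟩ : ∃ a, (∀ i, a < w i) ∧ 0 < a :=
    ((eventually_all.2 fun i => nhdsWithin_le_nhds (eventually_lt_nhds (hw i))).and
      self_mem_nhdsWithin).exists (f := 𝓝[>] (0 : ℝ))
  refine ⟨a, ha, fun d => ?_⟩
  have hterm (i : n) : 0 ≤ w i * d i ^ 2 := mul_nonneg (hw i).le (sq_nonneg (d i))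
  have hnorm : ‖d‖ ≤ √((∑ i, w i * d i ^ 2) / a) := by
    refine (pi_norm_le_iff_of_nonneg (Real.sqrt_nonneg _)).2 fun i => ?_
    rw [Real.norm_eq_abs]
    refine Real.abs_le_sqrt ((le_div_iff₀ ha).2 ?_)
    calc d i ^ 2 * a ≤ w i * d i ^ 2 := by nlinarith [hwa i, sq_nonneg (d i)]
      _ ≤ ∑ j, w j * d j ^ 2 := Finset.single_le_sum (fun j _ => hterm j) (Finset.mem_univ i)
  have := pow_le_pow_left₀ (norm_nonneg d) hnorm 2
  rw [Real.sq_sqrt (div_nonneg (Finset.sum_nonneg fun i _ => hterm i) ha.le)] at this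
  rwa [le_div_iff₀ ha, mul_comm] at this

/-- Sufficient decrease of a nonnegative `V` together with the error bound `V ≤ c ‖Δx‖²` gives
`V (k + 1) ≤ c / (a + c) * V k`, so the steps decay geometrically. -/
theorem cauchySeq_of_sufficient_decrease {E : Type*} [SeminormedAddCommGroup E] {x : ℕ → E}
    {V : ℕ → ℝ} {a c : ℝ} (ha : 0 < a) (hc : 0 ≤ c) (hV : ∀ k, 0 ≤ V k)
    (hdecrease : ∀ k, V (k + 1) + a * ‖x (k + 1) - x k‖ ^ 2 ≤ V k)
    (hbound : ∀ k, V k ≤ c * ‖x (k + 1) - x k‖ ^ 2) : CauchySeq x := by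
  set ρ := c / (a + c)
  have hρ0 : 0 ≤ ρ := by positivity
  have hρ1 : ρ < 1 := (div_lt_one (by positivity)).2 (by linarith)
  have hcontract : ∀ k, V (k + 1) ≤ ρ * V k := fun k => by
    have hmono : V (k + 1) ≤ V k := by nlinarith [hdecrease k]
    rw [div_mul_eq_mul_div, le_div_iff₀ (by positivity)]
    linarith [mul_le_mul_of_nonneg_left (hdecrease k) hc,
      mul_le_mul_of_nonneg_left (hbound k) ha.le, mul_le_mul_of_nonneg_left hmono ha.le]
  have hgeom : ∀ k, V k ≤ ρ ^ k * V 0 := fun k => by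
    induction k with
    | zero => simp
    | succ k ih => calc
        V (k + 1) ≤ ρ * V k := hcontract k
        _ ≤ ρ * (ρ ^ k * V 0) := by gcongr
        _ = ρ ^ (k + 1) * V 0 := by ring
  have hsqrt : √ρ < 1 := (Real.sqrt_lt' one_pos).2 (by simpa using hρ1)
  refine cauchySeq_of_le_geometric (√ρ) (√(V 0 / a)) hsqrt fun k => ?_
  rw [dist_comm, dist_eq_norm, ← pow_le_pow_iff_left₀ (norm_nonneg _) (by positivity) two_ne_zero,
    mul_pow, ← pow_mul, mul_comm k, pow_mul, Real.sq_sqrt (div_nonneg (hV 0) ha.le),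
    Real.sq_sqrt hρ0, div_mul_eq_mul_div, le_div_iff₀ ha]
  linarith [hdecrease k, hgeom k, hV (k + 1)]

namespace Matrix

section LowerPart

variable {n α : Type*} [LinearOrder n]

def lowerPart [Zero α] (A : Matrix n n α) : Matrix n n α :=
  of fun i j => if j ≤ i then A i j else 0

theorem isLowerTriangular_lowerPart [Zero α] (A : Matrix n n α) :
    (lowerPart A).IsLowerTriangular :=
  fun _ _ hij => if_neg (not_le.2 hij)

theorem lowerPart_add_transpose [AddCommMonoid α] {A : Matrix n n α} (hA : A.IsSymm) :
    lowerPart A + (lowerPart A)ᵀ = A + diagonal (diag A) := by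
  ext i j
  simp only [lowerPart, add_apply, transpose_apply, of_apply, diagonal_apply, diag_apply]
  rcases lt_trichotomy i j with h | rfl | h
  · simp [not_le.2 h, h.le, h.ne, hA.apply i j]
  · simp
  · simp [not_le.2 h, h.le, h.ne']

variable [Fintype n]

theorem det_lowerPart [CommRing α] (A : Matrix n n α) : (lowerPart A).det = ∏ i, A i i := by
  rw [det_of_isLowerTriangular _ (isLowerTriangular_lowerPart A)]
  simp [lowerPart]

theorem two_mul_dotProduct_lowerPart_mulVec [CommRing α] {A : Matrix n n α} (hA : A.IsSymm)
    (u : n → α) :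
    2 * (u ⬝ᵥ lowerPart A *ᵥ u) = u ⬝ᵥ A *ᵥ u + ∑ i, A i i * u i ^ 2 := by
  have hT : u ⬝ᵥ (lowerPart A)ᵀ *ᵥ u = u ⬝ᵥ lowerPart A *ᵥ u := by
    rw [mulVec_transpose, dotProduct_comm, dotProduct_mulVec]
  have hD : u ⬝ᵥ diagonal (diag A) *ᵥ u = ∑ i, A i i * u i ^ 2 := by
    simp only [dotProduct, mulVec_diagonal, diag_apply]
    exact Finset.sum_congr rfl fun i _ => by ring
  rw [← hD, ← dotProduct_add, ← add_mulVec, ← lowerPart_add_transpose hA, add_mulVec,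
    dotProduct_add, hT, two_mul]

theorem sub_dotProduct_mulVec_sub_of_lowerPart_mulVec [CommRing α] {A : Matrix n n α}
    (hA : A.IsSymm) {d e : n → α} (h : lowerPart A *ᵥ d = A *ᵥ e) :
    (e - d) ⬝ᵥ A *ᵥ (e - d) = e ⬝ᵥ A *ᵥ e - ∑ i, A i i * d i ^ 2 := by
  have hsymm : e ⬝ᵥ A *ᵥ d = d ⬝ᵥ A *ᵥ e := by
    rw [dotProduct_mulVec, ← mulVec_transpose, hA.eq, dotProduct_comm]
  have hquad := two_mul_dotProduct_lowerPart_mulVec hA d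
  rw [h] at hquad
  rw [mulVec_sub, sub_dotProduct, dotProduct_sub, dotProduct_sub, hsymm]
  linear_combination -hquad

end LowerPart

theorem exists_mul_mul_eq_self {K m n : Type*} [Field K] [Fintype m] [Fintype n] [DecidableEq m]
    [DecidableEq n] (A : Matrix m n K) : ∃ G : Matrix n m K, A * G * A = A := by
  obtain ⟨s, hs⟩ := A.mulVecLin.rangeRestrict.exists_rightInverse_of_surjective
    (LinearMap.range_rangeRestrict _)
  obtain ⟨g, hg⟩ := LinearMap.exists_extend s
  refine ⟨LinearMap.toMatrix' g, toLin'.injective (LinearMap.ext fun v => ?_)⟩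
  have hgs : g (A *ᵥ v) = s ⟨A *ᵥ v, LinearMap.mem_range_self _ v⟩ :=
    congr($hg ⟨A *ᵥ v, LinearMap.mem_range_self _ v⟩)
  have hAs := congr(Subtype.val ($hs ⟨A *ᵥ v, LinearMap.mem_range_self _ v⟩))
  simp only [LinearMap.codRestrict_apply, LinearMap.comp_apply, mulVecLin_apply,
    LinearMap.id_apply] at hAs
  simp [toLin'_mul, hgs, hAs]

section Linfty

attribute [local instance] Matrix.linftyOpSeminormedAddCommGroup

theorem exists_norm_mulVec_le {m n α : Type*} [Fintype m] [Fintype n] [NonUnitalSeminormedRing α]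
    (A : Matrix m n α) : ∃ C, 0 ≤ C ∧ ∀ v, ‖A *ᵥ v‖ ≤ C * ‖v‖ :=
  ⟨‖A‖, norm_nonneg A, linfty_opNorm_mulVec A⟩

end Linfty

theorem IsSymm.exists_dotProduct_mulVec_le {n : Type*} [Fintype n] [DecidableEq n]
    {A : Matrix n n ℝ} (hA : A.IsSymm) :
    ∃ c, 0 ≤ c ∧ ∀ e, e ⬝ᵥ A *ᵥ e ≤ c * ‖A *ᵥ e‖ ^ 2 := by
  obtain ⟨G, hG⟩ := exists_mul_mul_eq_self A
  obtain ⟨C, hC0, hC⟩ := exists_norm_mulVec_le G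
  refine ⟨Fintype.card n * C, by positivity, fun e => ?_⟩
  have hAGA : A *ᵥ (G *ᵥ (A *ᵥ e)) = A *ᵥ e := by rw [mulVec_mulVec, mulVec_mulVec, hG]
  calc e ⬝ᵥ A *ᵥ e = A *ᵥ e ⬝ᵥ G *ᵥ (A *ᵥ e) := by
        rw [← hAGA, dotProduct_mulVec, ← mulVec_transpose, hA.eq, hAGA]
    _ ≤ Fintype.card n * (‖A *ᵥ e‖ * ‖G *ᵥ (A *ᵥ e)‖) :=
        (le_abs_self _).trans (abs_dotProduct_le _ _)
    _ ≤ Fintype.card n * (‖A *ᵥ e‖ * (C * ‖A *ᵥ e‖)) := by gcongr; exact hC _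
    _ = Fintype.card n * C * ‖A *ᵥ e‖ ^ 2 := by ring

theorem PosSemidef.cauchySeq_of_lowerPart_mulVec_sub_eq {n : Type*} [Fintype n] [LinearOrder n]
    {Γ : Matrix n n ℝ} (hΓ : Γ.PosSemidef) (hdiag : ∀ i, 0 < Γ i i) {x : ℕ → n → ℝ}
    {y : n → ℝ} (hstep : ∀ k, lowerPart Γ *ᵥ (x k - x (k + 1)) = Γ *ᵥ (x k - y)) :
    CauchySeq x := by
  have hsymm : Γ.IsSymm := (conjTranspose_eq_transpose_of_trivial Γ).symm.trans hΓ.1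
  obtain ⟨a, ha, hdiag_norm⟩ := exists_pos_mul_norm_sq_le_sum_mul_sq hdiag
  obtain ⟨c, hc, hquad⟩ := hsymm.exists_dotProduct_mulVec_le
  obtain ⟨C, -, hC⟩ := exists_norm_mulVec_le (lowerPart Γ)
  refine cauchySeq_of_sufficient_decrease (V := fun k => (x k - y) ⬝ᵥ Γ *ᵥ (x k - y))
    (c := c * C ^ 2) ha (by positivity)
    (fun k => by simpa only [star_trivial] using hΓ.dotProduct_mulVec_nonneg (x k - y))
    (fun k => ?_) (fun k => ?_)
  · have henergy := sub_dotProduct_mulVec_sub_of_lowerPart_mulVec hsymm (hstep k)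
    rw [sub_sub_sub_cancel_left] at henergy
    rw [norm_sub_rev]
    linarith [hdiag_norm (x k - x (k + 1))]
  · calc (x k - y) ⬝ᵥ Γ *ᵥ (x k - y) ≤ c * ‖Γ *ᵥ (x k - y)‖ ^ 2 := hquad _
      _ ≤ c * (C * ‖x (k + 1) - x k‖) ^ 2 := by
        rw [← hstep k, norm_sub_rev]; gcongr; exact hC _
      _ = c * C ^ 2 * ‖x (k + 1) - x k‖ ^ 2 := by ring

end Matrix

/-- Gauss–Seidel convergence for consistent semidefinite systems (Keller): if
`Γ` is symmetric positive semidefinite with strictly positive diagonal and `b`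
lies in the column space of `Γ`, then the Gauss–Seidel iteration
`x_{k+1} = x_k + D_L⁻¹(b − Γ x_k)`, with `D_L` the lower triangular part of `Γ`
(including the diagonal), converges to a solution of `Γ x = b`. -/
theorem gauss_seidel_semidef_converges {R : ℕ}
    (Γ : Matrix (Fin R) (Fin R) ℝ) (hΓ : Γ.PosSemidef)
    (hdiag : ∀ i, 0 < Γ i i)
    (b : Fin R → ℝ) (hb : ∃ y, Γ.mulVec y = b)
    (x : ℕ → Fin R → ℝ)
    (hx : ∀ k, x (k + 1) =
      x k + (Matrix.of fun i j : Fin R => if j ≤ i then Γ i j else 0)⁻¹.mulVec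
        (b - Γ.mulVec (x k))) :
    ∃ xlim : Fin R → ℝ,
      Filter.Tendsto x Filter.atTop (nhds xlim) ∧ Γ.mulVec xlim = b := by
  obtain ⟨y, rfl⟩ := hb
  change ∀ k, x (k + 1) = x k + (lowerPart Γ)⁻¹ *ᵥ (Γ *ᵥ y - Γ *ᵥ x k) at hx
  have hunit : IsUnit (lowerPart Γ).det := by
    rw [det_lowerPart]
    exact (Finset.prod_pos fun i _ => hdiag i).ne'.isUnit
  have hstep : ∀ k, lowerPart Γ *ᵥ (x k - x (k + 1)) = Γ *ᵥ (x k - y) := fun k => by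
    rw [hx k, sub_add_cancel_left, mulVec_neg, mulVec_mulVec, mul_nonsing_inv _ hunit,
      one_mulVec, mulVec_sub, neg_sub]
  obtain ⟨xlim, hlim⟩ :=
    cauchySeq_tendsto_of_complete (hΓ.cauchySeq_of_lowerPart_mulVec_sub_eq hdiag hstep)
  refine ⟨xlim, hlim, ?_⟩
  have hcont (A : Matrix (Fin R) (Fin R) ℝ) : Continuous (A *ᵥ ·) :=
    continuous_const.matrix_mulVec continuous_id
  have hres : Tendsto (fun k => Γ *ᵥ (x k - y)) atTop (𝓝 (Γ *ᵥ (xlim - y))) :=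
    ((hcont Γ).tendsto _).comp (hlim.sub_const y)
  have hres_zero : Tendsto (fun k => Γ *ᵥ (x k - y)) atTop (𝓝 0) := by
    have := ((hcont (lowerPart Γ)).tendsto _).comp (hlim.sub (hlim.comp (tendsto_add_atTop_nat 1)))
    rw [sub_self, mulVec_zero] at this
    simp_rw [← hstep]
    exact this
  rw [← sub_eq_zero, ← mulVec_sub]
  exact tendsto_nhds_unique hres hres_zero
end

section
/- The gradient of the CP objective: for a tensor Z ∈ ℝ^{I_1×⋯×I_N} and factor matrices A^{(n)} ∈ ℝ^{I_n×R}, the partial derivative of f(A^{(1)},…,A^{(N)}) = ½‖Z − Σ_{r=1}^R a_r^{(1)} ∘ ⋯ ∘ a_r^{(N)}‖² with respect to A^{(n)} equals G^{(n)} = −Z_{(n)} Φ^{(n)} + A^{(n)} Γ^{(n)}, where Φ^{(n)} = A^{(N)} ⊙ ⋯ ⊙ A^{(n+1)} ⊙ A^{(n-1)} ⊙ ⋯ ⊙ A^{(1)} and Γ^{(n)} = ∗_{m≠n} (A^{(m)})^T A^{(m)}. -/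
/-!
Splitting each multi-index into its mode-`n` entry `j` and the tuple `c` of the remaining
entries turns `f`, as a function of `B = A⁽ⁿ⁾` alone, into the least-squares objective
`½ ‖Z₍ₙ₎ − B Φ⁽ⁿ⁾ᵀ‖²`, whose gradient is
`(B Φ⁽ⁿ⁾ᵀ − Z₍ₙ₎) Φ⁽ⁿ⁾ = −Z₍ₙ₎ Φ⁽ⁿ⁾ + B Φ⁽ⁿ⁾ᵀ Φ⁽ⁿ⁾`.
It remains that `Φ⁽ⁿ⁾ᵀ Φ⁽ⁿ⁾ = Γ⁽ⁿ⁾`: an entry of the Gram matrix of a Khatri–Rao product is a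
sum over tuples `c` of a product over modes, which factors as the product over modes of the
Gram entries of the factors.
-/

open Matrix BigOperators

attribute [local instance] Matrix.normedAddCommGroup Matrix.normedSpace

noncomputable section

/-- The mode-`n` matricization of a tensor: rows are indexed by the mode-`n`
index and columns by the tuples of remaining indices (mode-`n` fibers). -/
def matricize {N : ℕ} {I : Fin N → ℕ} (n : Fin N) (T : (∀ m, Fin (I m)) → ℝ) :
    Matrix (Fin (I n)) (∀ m : {m : Fin N // m ≠ n}, Fin (I m.1)) ℝ :=
  Matrix.of fun i c =>
    T fun m => if h : m = n then Fin.cast (congrArg I h).symm i else c ⟨m, h⟩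

/-- The continuous linear functional `H ↦ ∑ᵢᵣ Gᵢᵣ Hᵢᵣ` on matrices, i.e. the
Frobenius pairing with a fixed matrix `G`.  A map has gradient `G` iff its
Fréchet derivative is this functional. -/
def frobPairing {I R : ℕ} (G : Matrix (Fin I) (Fin R) ℝ) :
    Matrix (Fin I) (Fin R) ℝ →L[ℝ] ℝ :=
  LinearMap.toContinuousLinearMap
    { toFun := fun H => ∑ i, ∑ r, G i r * H i r
      map_add' := by
        intro x y
        simp [Matrix.add_apply, mul_add, Finset.sum_add_distrib]
      map_smul' := by
        intro c x
        simp [Matrix.smul_apply, Finset.mul_sum, mul_left_comm, smul_eq_mul] }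

/-- The CP objective `f = ½‖Z − ⟦A⁽¹⁾,…,A⁽ᴺ⁾⟧‖²` (Frobenius norm). -/
def cpObj {N R : ℕ} {I : Fin N → ℕ} (Z : (∀ k, Fin (I k)) → ℝ)
    (A : ∀ k, Matrix (Fin (I k)) (Fin R) ℝ) : ℝ :=
  (1 / 2) * ∑ i : ∀ k, Fin (I k), (Z i - ∑ r, ∏ k, A k (i k) r) ^ 2

/-- The Khatri-Rao product `Φ⁽ⁿ⁾` of the factor matrices of all modes other
than `n`, with rows indexed by tuples of the remaining indices. -/
def cpPhi {N R : ℕ} {I : Fin N → ℕ} (A : ∀ k, Matrix (Fin (I k)) (Fin R) ℝ)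
    (n : Fin N) :
    Matrix (∀ m : {m : Fin N // m ≠ n}, Fin (I m.1)) (Fin R) ℝ :=
  Matrix.of fun c r => ∏ m : {m : Fin N // m ≠ n}, A m.1 (c m) r

/-- The Hadamard product `Γ⁽ⁿ⁾` of the Gram matrices of the factor matrices of
all modes other than `n`. -/
def cpGamma {N R : ℕ} {I : Fin N → ℕ} (A : ∀ k, Matrix (Fin (I k)) (Fin R) ℝ)
    (n : Fin N) : Matrix (Fin R) (Fin R) ℝ :=
  Matrix.of fun p q => ∏ m ∈ Finset.univ.erase n, ((A m)ᵀ * A m) p q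

lemma frobPairing_apply {I R : ℕ} (G H : Matrix (Fin I) (Fin R) ℝ) :
    frobPairing G H = ∑ i, ∑ r, G i r * H i r := rfl

lemma frobPairing_mul_apply {I R : ℕ} {κ : Type*} [Fintype κ] (M : Matrix (Fin I) κ ℝ)
    (Φ : Matrix κ (Fin R) ℝ) (H : Matrix (Fin I) (Fin R) ℝ) :
    frobPairing (M * Φ) H = ∑ j, ∑ c, M j c * (H * Φᵀ) j c := by
  simp only [frobPairing_apply, mul_apply, transpose_apply, Finset.sum_mul, Finset.mul_sum]
  refine Finset.sum_congr rfl fun j _ => ?_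
  rw [Finset.sum_comm]
  exact Finset.sum_congr rfl fun c _ => Finset.sum_congr rfl fun r _ => by ring

theorem hasFDerivAt_half_sum_sq_sub {E ι : Type*} [NormedAddCommGroup E] [NormedSpace ℝ E]
    (s : Finset ι) (z : ι → ℝ) (ℓ : ι → E →L[ℝ] ℝ) (x : E) :
    HasFDerivAt (fun x => (1 / 2) * ∑ t ∈ s, (z t - ℓ t x) ^ 2)
      (∑ t ∈ s, (ℓ t x - z t) • ℓ t) x := by
  have hterm : ∀ t ∈ s, HasFDerivAt (fun x => (z t - ℓ t x) ^ 2)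
      ((2 • (z t - ℓ t x) ^ (2 - 1)) • (0 - ℓ t)) x :=
    fun t _ => ((hasFDerivAt_const (z t) x).sub (ℓ t).hasFDerivAt).pow 2
  refine ((HasFDerivAt.fun_sum hterm).const_mul (1 / 2)).congr_fderiv ?_
  rw [Finset.smul_sum]
  refine Finset.sum_congr rfl fun t _ => ?_
  ext v
  simp only [Nat.add_one_sub_one, pow_one, nsmul_eq_mul, Nat.cast_ofNat, zero_sub, smul_neg,
    _root_.neg_apply, _root_.smul_apply, smul_eq_mul]
  ring

theorem hasFDerivAt_half_sum_sq_sub_mul_transpose {I R : ℕ} {κ : Type*} [Fintype κ]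
    (X : Matrix (Fin I) κ ℝ) (Φ : Matrix κ (Fin R) ℝ) (B : Matrix (Fin I) (Fin R) ℝ) :
    HasFDerivAt
      (fun B : Matrix (Fin I) (Fin R) ℝ => (1 / 2) * ∑ j, ∑ c, (X j c - (B * Φᵀ) j c) ^ 2)
      (frobPairing (-(X * Φ) + B * (Φᵀ * Φ))) B := by
  have h := hasFDerivAt_half_sum_sq_sub (E := Matrix (Fin I) (Fin R) ℝ) Finset.univ
    (fun t : Fin I × κ => X t.1 t.2)
    (fun t => (entryLinearMap ℝ ℝ t.1 t.2 ∘ₗ mulRightLinearMap (Fin I) ℝ Φᵀ).toContinuousLinearMap)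
    B
  simp only [← Finset.univ_product_univ, Finset.sum_product] at h
  refine h.congr_fderiv (ContinuousLinearMap.ext fun H => ?_)
  rw [show -(X * Φ) + B * (Φᵀ * Φ) = (B * Φᵀ - X) * Φ by
    rw [Matrix.sub_mul, Matrix.mul_assoc]; abel]
  refine Eq.trans ?_ (frobPairing_mul_apply _ _ _).symm
  simp only [FunLike.coe_sum, Finset.sum_apply]
  -- each summand unfolds to `((B * Φᵀ) j c - X j c) * (H * Φᵀ) j c`; `simp` stalls here because
  -- the entry functionals carry the plain (defeq, not syntactically equal) matrix instances
  rfl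

section CP

variable {N R : ℕ} {I : Fin N → ℕ}

theorem matricize_apply (n : Fin N) (Z : (∀ k, Fin (I k)) → ℝ) (j : Fin (I n))
    (c : ∀ m : {m : Fin N // m ≠ n}, Fin (I m.1)) :
    matricize n Z j c = Z ((Equiv.piSplitAt n fun k => Fin (I k)).symm (j, c)) := by
  refine congrArg Z (funext fun m => ?_)
  by_cases h : m = n
  · subst h
    simp
  · simp [h]

theorem prod_update_piSplitAt_symm (A : ∀ k, Matrix (Fin (I k)) (Fin R) ℝ) (n : Fin N)
    (B : Matrix (Fin (I n)) (Fin R) ℝ) (j : Fin (I n))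
    (c : ∀ m : {m : Fin N // m ≠ n}, Fin (I m.1)) (r : Fin R) :
    ∏ k, Function.update A n B k ((Equiv.piSplitAt n fun k => Fin (I k)).symm (j, c) k) r =
      B j r * cpPhi A n c r := by
  rw [Fintype.prod_eq_mul_prod_subtype_ne _ n]
  congr 1
  · simp
  · exact Finset.prod_congr rfl fun m _ => by simp [m.2]

theorem cpObj_update (Z : (∀ k, Fin (I k)) → ℝ) (A : ∀ k, Matrix (Fin (I k)) (Fin R) ℝ)
    (n : Fin N) (B : Matrix (Fin (I n)) (Fin R) ℝ) :
    cpObj Z (Function.update A n B) =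
      (1 / 2) * ∑ j, ∑ c, (matricize n Z j c - (B * (cpPhi A n)ᵀ) j c) ^ 2 := by
  rw [cpObj, ← (Equiv.piSplitAt n fun k => Fin (I k)).symm.sum_comp, Fintype.sum_prod_type]
  simp only [matricize_apply, prod_update_piSplitAt_symm, mul_apply, transpose_apply]

theorem cpGamma_eq_transpose_mul_cpPhi (A : ∀ k, Matrix (Fin (I k)) (Fin R) ℝ) (n : Fin N) :
    cpGamma A n = (cpPhi A n)ᵀ * cpPhi A n := by
  ext p q
  simp only [cpGamma, cpPhi, of_apply, mul_apply, transpose_apply, ← Finset.prod_mul_distrib]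
  rw [Finset.prod_subtype (p := (· ≠ n)) _ (by simp), Fintype.prod_sum]

end CP

/-- The gradient of the CP objective with respect to the mode-`n` factor
matrix is `G⁽ⁿ⁾ = −Z₍ₙ₎ Φ⁽ⁿ⁾ + A⁽ⁿ⁾ Γ⁽ⁿ⁾`: the Fréchet derivative of
`B ↦ f(A⁽¹⁾,…,B,…,A⁽ᴺ⁾)` at `A⁽ⁿ⁾` is the Frobenius pairing with `G⁽ⁿ⁾`. -/
theorem cp_gradient {N R : ℕ} (I : Fin N → ℕ) (Z : (∀ k, Fin (I k)) → ℝ)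
    (A : ∀ k, Matrix (Fin (I k)) (Fin R) ℝ) (n : Fin N) :
    HasFDerivAt (fun B => cpObj Z (Function.update A n B))
      (frobPairing (-(matricize n Z * cpPhi A n) + A n * cpGamma A n))
      (A n) := by
  have h := hasFDerivAt_half_sum_sq_sub_mul_transpose (matricize n Z) (cpPhi A n) (A n)
  rw [← cpGamma_eq_transpose_mul_cpPhi] at h
  exact h.congr_of_eventuallyEq (Filter.Eventually.of_forall fun B => cpObj_update Z A n B)

end
end
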